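/- For integers d ≥ 3 and L ≥ 0, every eigenvalue λ of the Dirichlet Laplacian 𝓛_D of the finite d-regular tree of depth L+1 satisfies 1 − (2/d)·√(d−1) < λ < 1 + (2/d)·√(d−1); that is, all Dirichlet eigenvalues lie strictly outside the spectral gap of the infinite d-regular tree, in the band of its continuous spectrum. -/

import Mathlib

open scoped Classical

/-- Vertices of the finite (truncated) `d`-regular tree whose leaves are at depth `R`:
a vertex at depth `n ≤ R` is encoded by its depth together with its path from the root,
with an entry in `Fin d` at step `0` (the root has `d` children) and entries `< d − 1`
at steps `1, …, n−1` (each deeper non-leaf vertex has `d − 1` children, hence degree `d`);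
entries at steps `≥ n` are padded by `0`. -/
abbrev TreeVertex (d R : ℕ) : Type :=
  { p : Fin (R + 1) × (Fin R → Fin d) //
      (∀ i : Fin R, p.1.1 ≤ i.1 → (p.2 i : ℕ) = 0) ∧
      (∀ i : Fin R, 0 < i.1 → i.1 < p.1.1 → (p.2 i : ℕ) < d - 1) }

namespace TreeVertex

/-- The depth of a vertex. -/
def depth {d R : ℕ} (v : TreeVertex d R) : ℕ := v.1.1.1

/-- `ChildOf u v` means `v` is a child of `u`. -/
def ChildOf {d R : ℕ} (u v : TreeVertex d R) : Prop :=
  v.depth = u.depth + 1 ∧ ∀ i : Fin R, i.1 < u.depth → v.1.2 i = u.1.2 i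

/-- `Desc u v` means `v` is a descendant of `u` (including `u` itself). -/
def Desc {d R : ℕ} (u v : TreeVertex d R) : Prop :=
  u.depth ≤ v.depth ∧ ∀ i : Fin R, i.1 < u.depth → v.1.2 i = u.1.2 i

/-- The root of the tree (for `d > 0`). -/
def root (d R : ℕ) (hd : 0 < d) : TreeVertex d R :=
  ⟨(0, fun _ => ⟨0, hd⟩), fun _ _ => rfl, fun i _ h => absurd h (by simp)⟩

/-- Two vertices are adjacent iff one is a child of the other. -/
def Adj {d R : ℕ} (u v : TreeVertex d R) : Prop := ChildOf u v ∨ ChildOf v u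

/-- The interior vertices: those of depth `< R`, i.e. the non-leaves. -/
abbrev Interior (d R : ℕ) : Type := { v : TreeVertex d R // v.depth < R }

end TreeVertex

open TreeVertex

/-- The Dirichlet Laplacian `𝓛_D` of the finite `d`-regular tree of depth `L+1`:
the normalized Laplacian (every interior vertex has degree `d`) restricted to the rows
and columns of the interior vertices, i.e. with the leaves (depth `L+1`) deleted:
diagonal entries `1` and entry `−1/d` between adjacent interior vertices. -/
noncomputable def dirichletLaplacian (d L : ℕ) :
    Matrix (Interior d (L + 1)) (Interior d (L + 1)) ℝ := fun u v =>
  if u = v then 1 else if Adj u.1 v.1 then -(1 / (d : ℝ)) else 0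

/-!
Write `μ = d (1 - λ)`, so that an eigenvector `x` satisfies `∑_{u ∼ v} x u = μ x v`. Orienting every
edge from parent to child gives `μ ‖x‖² = 2 ∑_{p → c} x_p x_c`, and the weighted AM–GM inequality
`2 s |x_p x_c| ≤ x_p² + s² x_c²` with `s = √(d - 1)` bounds `2 s |μ| ‖x‖²` by
`∑_w (#children w + s² #parents w) x_w²`. Each weight is at most `2 s²`: the root has at most `d`
children and no parent, every other vertex at most `d - 1` children and one parent. Vertices at
depth `L` have no interior children, so their weight is at most `s²`, and `x` cannot vanish on
all of them, since the eigen equation at a child propagates zeros towards the root. Hence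
`|μ| < 2 √(d - 1)`.
-/

open Finset Matrix

section OrientedGraph

variable {V : Type*} [Fintype V] {A R : V → V → Prop}

theorem sum_mul_sum_adj_eq_two_mul (hA : ∀ u v, A u v ↔ R u v ∨ R v u)
    (hR : ∀ u v, R u v → ¬ R v u) (x : V → ℝ) :
    ∑ v, x v * ∑ u with A v u, x u = 2 * ∑ v, ∑ u with R v u, x v * x u := by
  have hsplit : ∀ v u, (if A v u then x v * x u else 0)
      = (if R v u then x v * x u else 0) + if R u v then x u * x v else 0 := by
    intro v u
    by_cases h : R v u
    · simp [hA, h, hR v u h]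
    · by_cases h' : R u v <;> simp [hA, h, h', mul_comm]
  calc ∑ v, x v * ∑ u with A v u, x u
      = ∑ v, ∑ u, if A v u then x v * x u else 0 := by
        simp only [mul_sum, sum_filter, mul_ite, mul_zero]
    _ = ∑ v, ∑ u, (if R v u then x v * x u else 0)
          + ∑ u, ∑ v, if R v u then x v * x u else 0 := by
        simp only [hsplit, sum_add_distrib]
    _ = 2 * ∑ v, ∑ u with R v u, x v * x u := by
        rw [sum_comm (f := fun u v => if R v u then x v * x u else 0)]
        simp only [sum_filter]
        ring

theorem two_mul_abs_sum_le {s : ℝ} (hs : 0 ≤ s) (x : V → ℝ) :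
    2 * s * |∑ v, ∑ u with R v u, x v * x u|
      ≤ ∑ w, ((#{u | R w u} : ℝ) + s ^ 2 * #{u | R u w}) * x w ^ 2 := by
  have hamgm : ∀ a b : ℝ, 2 * s * |a * b| ≤ a ^ 2 + s ^ 2 * b ^ 2 := fun a b => by
    rw [abs_mul]
    nlinarith [sq_nonneg (|a| - s * |b|), sq_abs a, sq_abs b]
  calc 2 * s * |∑ v, ∑ u with R v u, x v * x u|
      ≤ 2 * s * ∑ v, ∑ u with R v u, |x v * x u| := by
        gcongr
        exact (abs_sum_le_sum_abs _ _).trans (sum_le_sum fun v _ => abs_sum_le_sum_abs _ _)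
    _ ≤ ∑ v, ∑ u with R v u, (x v ^ 2 + s ^ 2 * x u ^ 2) := by
        simp only [mul_sum]
        exact sum_le_sum fun v _ => sum_le_sum fun u _ => hamgm _ _
    _ = ∑ w, ((#{u | R w u} : ℝ) + s ^ 2 * #{u | R u w}) * x w ^ 2 := by
        simp only [sum_add_distrib, add_mul, sum_const, nsmul_eq_mul]
        congr 1
        simp only [sum_filter]
        rw [sum_comm]
        simp only [card_filter, Nat.cast_sum, Nat.cast_ite, Nat.cast_one, Nat.cast_zero, mul_sum,
          sum_mul, mul_ite, ite_mul, mul_one, mul_zero, zero_mul]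

theorem abs_lt_of_sum_adj_eq_mul (hA : ∀ u v, A u v ↔ R u v ∨ R v u)
    (hR : ∀ u v, R u v → ¬ R v u) {x : V → ℝ} {μ s : ℝ}
    (hs : 0 < s) (heig : ∀ v, ∑ u with A v u, x u = μ * x v)
    (hdeg : ∀ w, (#{u | R w u} : ℝ) + s ^ 2 * #{u | R u w} ≤ 2 * s ^ 2)
    {w₀ : V} (hw₀ : (#{u | R w₀ u} : ℝ) + s ^ 2 * #{u | R u w₀} < 2 * s ^ 2) (hx : x w₀ ≠ 0) :
    |μ| < 2 * s := by
  have hQ : 0 < ∑ w, x w ^ 2 :=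
    sum_pos' (fun w _ => sq_nonneg _) ⟨w₀, mem_univ _, by positivity⟩
  have hquad : μ * ∑ w, x w ^ 2 = 2 * ∑ v, ∑ u with R v u, x v * x u := by
    rw [← sum_mul_sum_adj_eq_two_mul hA hR, mul_sum]
    exact sum_congr rfl fun v _ => by rw [heig]; ring
  have hweights : ∑ w, ((#{u | R w u} : ℝ) + s ^ 2 * #{u | R u w}) * x w ^ 2
      < ∑ w, 2 * s ^ 2 * x w ^ 2 :=
    sum_lt_sum (fun w _ => mul_le_mul_of_nonneg_right (hdeg w) (sq_nonneg _))
      ⟨w₀, mem_univ _, mul_lt_mul_of_pos_right hw₀ (by positivity)⟩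
  have key : s * (|μ| * ∑ w, x w ^ 2) < s * (2 * s * ∑ w, x w ^ 2) := by
    calc s * (|μ| * ∑ w, x w ^ 2) = 2 * s * |∑ v, ∑ u with R v u, x v * x u| := by
          rw [← abs_of_pos hQ, ← abs_mul, hquad, abs_mul, abs_two]; ring
      _ ≤ _ := two_mul_abs_sum_le hs.le x
      _ < ∑ w, 2 * s ^ 2 * x w ^ 2 := hweights
      _ = s * (2 * s * ∑ w, x w ^ 2) := by rw [← mul_sum]; ring
  exact lt_of_mul_lt_mul_right (lt_of_mul_lt_mul_left key hs.le) hQ.le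

end OrientedGraph

namespace TreeVertex

variable {d R : ℕ}

theorem ext_of_depth_eq {u v : TreeVertex d R} (hdepth : u.depth = v.depth)
    (hpath : ∀ i : Fin R, i.1 < u.depth → u.1.2 i = v.1.2 i) : u = v := by
  refine Subtype.ext (Prod.ext (Fin.ext hdepth) (funext fun i => ?_))
  by_cases hi : i.1 < u.depth
  · exact hpath i hi
  · have hu := u.2.1 i (by simp only [depth] at hi; omega)
    have hv := v.2.1 i (by simp only [depth] at hi hdepth; omega)
    exact Fin.ext (hu.trans hv.symm)

theorem ChildOf.asymm {u v : TreeVertex d R} (h : ChildOf u v) : ¬ ChildOf v u :=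
  fun h' => by have := h.1; have := h'.1; omega

theorem ChildOf.parent_unique {u₁ u₂ v : TreeVertex d R} (h₁ : ChildOf u₁ v)
    (h₂ : ChildOf u₂ v) : u₁ = u₂ :=
  ext_of_depth_eq (by have := h₁.1; have := h₂.1; omega)
    fun i hi => (h₁.2 i hi).symm.trans (h₂.2 i (by have := h₁.1; have := h₂.1; omega))

theorem ChildOf.eq_of_entry_eq {u v₁ v₂ : TreeVertex d R} (h₁ : ChildOf u v₁)
    (h₂ : ChildOf u v₂) (hu : u.depth < R)
    (hentry : v₁.1.2 ⟨u.depth, hu⟩ = v₂.1.2 ⟨u.depth, hu⟩) : v₁ = v₂ := by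
  refine ext_of_depth_eq (h₁.1.trans h₂.1.symm) fun i hi => ?_
  rcases lt_or_eq_of_le (Nat.lt_succ_iff.mp (h₁.1 ▸ hi)) with hlt | heq
  · exact (h₁.2 i hlt).trans (h₂.2 i hlt).symm
  · exact (congrArg _ (Fin.ext heq)).trans (hentry.trans (congrArg _ (Fin.ext heq.symm)))

theorem not_adj_self (v : TreeVertex d R) : ¬ Adj v v :=
  fun h => h.elim (fun h => h.asymm h) (fun h => h.asymm h)

/-- The child of `v` whose path continues with the entry `0`. -/
def firstChild (hd : 2 ≤ d) (v : TreeVertex d R) (hv : v.depth < R) : TreeVertex d R :=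
  ⟨(⟨v.depth + 1, by omega⟩, v.1.2),
    fun i hi => v.2.1 i (by simp only [depth] at hi; omega),
    fun i h0 hi => by
      by_cases hlt : i.1 < v.depth
      · exact v.2.2 i h0 hlt
      · have := v.2.1 i (by simp only [depth] at hlt; omega)
        simp only at this ⊢
        omega⟩

theorem childOf_firstChild (hd : 2 ≤ d) (v : TreeVertex d R) (hv : v.depth < R) :
    ChildOf v (firstChild hd v hv) :=
  ⟨rfl, fun _ _ => rfl⟩

end TreeVertex

namespace Interior

variable {d L : ℕ}

theorem injOn_entry_children (w : Interior d (L + 1)) :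
    Set.InjOn (fun u : Interior d (L + 1) => (u.1.1.2 ⟨w.1.depth, w.2⟩ : ℕ))
      ({u : Interior d (L + 1) | ChildOf w.1 u.1} : Finset _) := fun _ h₁ _ h₂ hentry =>
  Subtype.ext ((mem_filter.mp h₁).2.eq_of_entry_eq (mem_filter.mp h₂).2 w.2 (Fin.ext hentry))

theorem card_children_le (w : Interior d (L + 1)) :
    #{u : Interior d (L + 1) | ChildOf w.1 u.1} ≤ d := by
  simpa using card_le_card_of_injOn (t := range d) _
    (fun u _ => mem_range.mpr (u.1.1.2 _).isLt) (injOn_entry_children w)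

theorem card_children_le_sub_one (w : Interior d (L + 1)) (hw : 0 < w.1.depth) :
    #{u : Interior d (L + 1) | ChildOf w.1 u.1} ≤ d - 1 := by
  simpa using card_le_card_of_injOn (t := range (d - 1)) _
    (fun u hu => mem_range.mpr (u.1.2.2 _ hw (by
      have := (mem_filter.mp hu).2.1
      simp only [depth] at this ⊢
      omega)))
    (injOn_entry_children w)

theorem card_children_eq_zero (w : Interior d (L + 1)) (hw : w.1.depth = L) :
    #{u : Interior d (L + 1) | ChildOf w.1 u.1} = 0 := by
  refine card_eq_zero.mpr (filter_eq_empty_iff.mpr fun u _ hu => ?_)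
  have := hu.1; have := u.2; omega

theorem card_parents_le_one (w : Interior d (L + 1)) :
    #{u : Interior d (L + 1) | ChildOf u.1 w.1} ≤ 1 :=
  card_le_one.mpr fun _ h₁ _ h₂ =>
    Subtype.ext ((mem_filter.mp h₁).2.parent_unique (mem_filter.mp h₂).2)

theorem card_parents_eq_zero (w : Interior d (L + 1)) (hw : w.1.depth = 0) :
    #{u : Interior d (L + 1) | ChildOf u.1 w.1} = 0 := by
  refine card_eq_zero.mpr (filter_eq_empty_iff.mpr fun u _ hu => ?_)
  have := hu.1; omega

theorem card_children_add_card_parents_le (hd : 2 ≤ d) (w : Interior d (L + 1)) :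
    (#{u : Interior d (L + 1) | ChildOf w.1 u.1} : ℝ)
      + ((d : ℝ) - 1) * #{u : Interior d (L + 1) | ChildOf u.1 w.1} ≤ 2 * ((d : ℝ) - 1) := by
  have hd' : (2 : ℝ) ≤ d := by exact_mod_cast hd
  rcases Nat.eq_zero_or_pos w.1.depth with hroot | hw
  · have hc : (#{u : Interior d (L + 1) | ChildOf w.1 u.1} : ℝ) ≤ d := by
      exact_mod_cast card_children_le w
    rw [card_parents_eq_zero w hroot]
    push_cast
    linarith
  · have hc : (#{u : Interior d (L + 1) | ChildOf w.1 u.1} : ℝ) ≤ (d : ℝ) - 1 := by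
      rw [← Nat.cast_pred (by omega)]
      exact_mod_cast card_children_le_sub_one w hw
    have hp : (#{u : Interior d (L + 1) | ChildOf u.1 w.1} : ℝ) ≤ 1 := by
      exact_mod_cast card_parents_le_one w
    nlinarith

theorem card_children_add_card_parents_lt (hd : 2 ≤ d) (w : Interior d (L + 1))
    (hw : w.1.depth = L) :
    (#{u : Interior d (L + 1) | ChildOf w.1 u.1} : ℝ)
      + ((d : ℝ) - 1) * #{u : Interior d (L + 1) | ChildOf u.1 w.1} < 2 * ((d : ℝ) - 1) := by
  have hd' : (2 : ℝ) ≤ d := by exact_mod_cast hd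
  have hp : (#{u : Interior d (L + 1) | ChildOf u.1 w.1} : ℝ) ≤ 1 := by
    exact_mod_cast card_parents_le_one w
  rw [card_children_eq_zero w hw]
  push_cast
  nlinarith

theorem eq_zero_of_sum_adj_eq_mul_of_bottom_eq_zero (hd : 2 ≤ d)
    {x : Interior d (L + 1) → ℝ} {μ : ℝ} (heig : ∀ v, ∑ u with Adj v.1 u.1, x u = μ * x v)
    (hbottom : ∀ v : Interior d (L + 1), v.1.depth = L → x v = 0) : x = 0 := by
  suffices h : ∀ k, ∀ v : Interior d (L + 1), L ≤ v.1.depth + k → x v = 0 from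
    funext fun v => h L v (by omega)
  intro k
  induction k with
  | zero => exact fun v hv => hbottom v (by have := v.2; omega)
  | succ k ih =>
    intro v hv
    by_cases hdeep : L ≤ v.1.depth + k
    · exact ih v hdeep
    let w : Interior d (L + 1) := ⟨firstChild hd v.1 v.2, by show v.1.depth + 1 < L + 1; omega⟩
    have hvw : ChildOf v.1 w.1 := childOf_firstChild hd v.1 v.2
    -- the eigen equation at `w` involves only its parent `v` and vertices deeper than `v`
    have hsum : ∑ u with Adj w.1 u.1, x u = x v := by
      refine sum_eq_single_of_mem v (mem_filter.mpr ⟨mem_univ _, Or.inr hvw⟩) fun u hu huv => ?_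
      rcases (mem_filter.mp hu).2 with hwu | huw
      · exact ih u (by have := hwu.1; have := hvw.1; omega)
      · exact absurd (Subtype.ext (huw.parent_unique hvw)) huv
    have hw0 : x w = 0 := ih w (by have := hvw.1; omega)
    rw [← hsum, heig, hw0, mul_zero]

end Interior

theorem dirichletLaplacian_mulVec_apply (d L : ℕ) (x : Interior d (L + 1) → ℝ)
    (v : Interior d (L + 1)) :
    (dirichletLaplacian d L *ᵥ x) v = x v - (∑ u with Adj v.1 u.1, x u) / d := by
  have hentry : ∀ u, dirichletLaplacian d L v u * x u
      = (if v = u then x u else 0) - if Adj v.1 u.1 then x u / d else 0 := by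
    intro u
    by_cases h : v = u
    · subst h
      simp [dirichletLaplacian, not_adj_self]
    · by_cases h' : Adj v.1 u.1 <;> simp [dirichletLaplacian, h, h', div_eq_inv_mul]
  simp only [mulVec, dotProduct, hentry, sum_sub_distrib, sum_ite_eq, mem_univ, if_true,
    sum_filter, sum_div, ite_div, zero_div]

theorem sum_adj_eq_of_mulVec_eq_smul {d L : ℕ} (hd : 0 < d) {x : Interior d (L + 1) → ℝ}
    {lam : ℝ} (hx : dirichletLaplacian d L *ᵥ x = lam • x) (v : Interior d (L + 1)) :
    ∑ u with Adj v.1 u.1, x u = d * (1 - lam) * x v := by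
  have hv := congrFun hx v
  rw [dirichletLaplacian_mulVec_apply, Pi.smul_apply, smul_eq_mul] at hv
  have hd' : (d : ℝ) ≠ 0 := by positivity
  field_simp at hv
  linarith

/-- For integers `d ≥ 3` and `L ≥ 0`, every eigenvalue `λ` of the
Dirichlet Laplacian `𝓛_D` of the finite `d`-regular tree of depth `L+1` satisfies
`1 − (2/d)·√(d−1) < λ < 1 + (2/d)·√(d−1)`: all Dirichlet eigenvalues lie strictly
inside the band of the continuous spectrum of the infinite `d`-regular tree. -/
theorem dirichlet_eigenvalues_in_continuous_band (d L : ℕ) (hd : 3 ≤ d) (lam : ℝ)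
    (h : ∃ x : Interior d (L + 1) → ℝ, x ≠ 0 ∧ (dirichletLaplacian d L).mulVec x = lam • x) :
    1 - (2 / (d : ℝ)) * Real.sqrt ((d : ℝ) - 1) < lam ∧
      lam < 1 + (2 / (d : ℝ)) * Real.sqrt ((d : ℝ) - 1) := by
  obtain ⟨x, hx0, hx⟩ := h
  have hd2 : 2 ≤ d := by omega
  have hdR : (3 : ℝ) ≤ d := by exact_mod_cast hd
  have hdpos : (0 : ℝ) < d := by positivity
  have heig := sum_adj_eq_of_mulVec_eq_smul (by omega) hx
  obtain ⟨w₀, hw₀, hxw₀⟩ : ∃ w : Interior d (L + 1), w.1.depth = L ∧ x w ≠ 0 := by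
    by_contra! hbottom
    exact hx0 (Interior.eq_zero_of_sum_adj_eq_mul_of_bottom_eq_zero hd2 heig hbottom)
  have hs : Real.sqrt ((d : ℝ) - 1) ^ 2 = d - 1 := Real.sq_sqrt (by linarith)
  have hμ : |(d : ℝ) * (1 - lam)| < 2 * Real.sqrt ((d : ℝ) - 1) :=
    abs_lt_of_sum_adj_eq_mul (R := fun u v : Interior d (L + 1) => ChildOf u.1 v.1)
      (fun _ _ => Iff.rfl) (fun _ _ h => h.asymm) (Real.sqrt_pos.mpr (by linarith)) heig
      (fun w => by rw [hs]; exact Interior.card_children_add_card_parents_le hd2 w)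
      (by rw [hs]; exact Interior.card_children_add_card_parents_lt hd2 w₀ hw₀) hxw₀
  rw [abs_mul, Nat.abs_cast, ← lt_div_iff₀' hdpos, mul_div_right_comm] at hμ
  obtain ⟨hlo, hhi⟩ := abs_sub_lt_iff.mp hμ
  exact ⟨by linarith, by linarith⟩
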